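/- Under the standing hypotheses, fix for each e ∈ G₀ an enumeration X_e = {g_{1,e} = e, g_{2,e}, …, g_{n_e,e}} of X_e = {h ∈ G : r(h) = e}, and suppose G satisfies: for every l ∈ G and every 1 ≤ j ≤ n_{d(l)} = n_{r(l)}, if g_{j,r(l)}⁻¹ · l · g_{j,d(l)} ∈ G₀ then l ∈ G₀. If R is an α-partial Galois extension of R^α, then T is a β-Galois extension of T^β. -/

import Mathlib

universe u

/-- A groupoid in the algebraic sense of Lawson: a non-empty set `G` with a
partially defined binary operation (here modeled by a total operation `mul`
whose value is only constrained when it is defined, i.e. when `d g = r h`),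
an inversion `inv`, and domain/range maps `d`, `r`. -/
structure AlgGroupoid (G : Type u) where
  mul : G → G → G
  inv : G → G
  d : G → G
  r : G → G
  mul_assoc' : ∀ g h l, d g = r h → d h = r l → mul (mul g h) l = mul g (mul h l)
  mul_d : ∀ g, mul g (d g) = g
  r_mul : ∀ g, mul (r g) g = g
  inv_mul : ∀ g, mul (inv g) g = d g
  mul_inv : ∀ g, mul g (inv g) = r g
  d_mul : ∀ g h, d g = r h → d (mul g h) = d h
  r_mul' : ∀ g h, d g = r h → r (mul g h) = r g
  d_inv : ∀ g, d (inv g) = r g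
  r_inv : ∀ g, r (inv g) = d g
  inv_inv : ∀ g, inv (inv g) = g
  d_d : ∀ g, d (d g) = d g
  r_d : ∀ g, r (d g) = d g
  d_r : ∀ g, d (r g) = r g
  r_r : ∀ g, r (r g) = r g

/-- `e` is an identity element of the groupoid `𝔾`, i.e. an element of `G₀`. -/
def AlgGroupoid.isId {G : Type u} (𝔾 : AlgGroupoid G) (e : G) : Prop := 𝔾.d e = e

instance {G : Type u} [DecidableEq G] (𝔾 : AlgGroupoid G) (e : G) : Decidable (𝔾.isId e) :=
  inferInstanceAs (Decidable (𝔾.d e = e))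

/-- `D` is a two-sided ideal of `E` (both being subsets of an ambient
non-unital ring `T`). -/
structure IsIdealIn {T : Type u} [NonUnitalRing T] (D E : Set T) : Prop where
  subset : D ⊆ E
  zero_mem : (0 : T) ∈ D
  add_mem : ∀ ⦃x y : T⦄, x ∈ D → y ∈ D → x + y ∈ D
  neg_mem : ∀ ⦃x : T⦄, x ∈ D → -x ∈ D
  mul_mem_left : ∀ ⦃x y : T⦄, x ∈ E → y ∈ D → x * y ∈ D
  mul_mem_right : ∀ ⦃x y : T⦄, x ∈ D → y ∈ E → x * y ∈ D

/-- `u` is a (two-sided) multiplicative identity element of the subset `D`. -/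
def IsIdentityElem {T : Type u} [NonUnitalRing T] (u : T) (D : Set T) : Prop :=
  u ∈ D ∧ ∀ x ∈ D, u * x = x ∧ x * u = x

/-- A partial action `α = ({D_g}, {α_g})` of a groupoid `𝔾` on the ring whose
carrier is the subset `R` of the ambient non-unital ring `T` (take
`R = Set.univ` for a partial action on `T` itself).  For each `g`, `D (r g)`
is an ideal of `R`, `D g` is an ideal of `D (r g)` and `act g` restricts to a
ring isomorphism from `D (inv g)` onto `D g`; moreover `act e` is the identity
of `D e` for identities `e`, and for composable `g, h` the map `act (mul g h)`
extends `act g ∘ act h` (whose domain is `(act h)⁻¹ (D (inv g) ∩ D h)`). -/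
structure PartialGroupoidAction {G : Type u} (𝔾 : AlgGroupoid G) (T : Type u)
    [NonUnitalRing T] (R : Set T) where
  D : G → Set T
  act : G → T → T
  ideal_r : ∀ g, IsIdealIn (D (𝔾.r g)) R
  ideal : ∀ g, IsIdealIn (D g) (D (𝔾.r g))
  bijOn : ∀ g, Set.BijOn (act g) (D (𝔾.inv g)) (D g)
  map_add : ∀ g, ∀ x ∈ D (𝔾.inv g), ∀ y ∈ D (𝔾.inv g), act g (x + y) = act g x + act g y
  map_mul : ∀ g, ∀ x ∈ D (𝔾.inv g), ∀ y ∈ D (𝔾.inv g), act g (x * y) = act g x * act g y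
  act_id : ∀ e, 𝔾.isId e → ∀ x ∈ D e, act e x = x
  dom_cond : ∀ g h, 𝔾.d g = 𝔾.r h → ∀ x ∈ D (𝔾.inv h), act h x ∈ D (𝔾.inv g) →
    x ∈ D (𝔾.inv (𝔾.mul g h))
  comp_cond : ∀ g h, 𝔾.d g = 𝔾.r h → ∀ x ∈ D (𝔾.inv h), act h x ∈ D (𝔾.inv g) →
    act g (act h x) = act (𝔾.mul g h) x

/-- The partial action `α` is global if, for all composable `g, h`, the
composite `α_g ∘ α_h` (taken on its largest possible domain) coincides with
`α_{gh}`; since both maps always agree on the domain of the composite, this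
amounts to the equality of the two domains. -/
def PartialGroupoidAction.IsGlobal {G : Type u} {𝔾 : AlgGroupoid G} {T : Type u}
    [NonUnitalRing T] {R : Set T} (α : PartialGroupoidAction 𝔾 T R) : Prop :=
  ∀ g h, 𝔾.d g = 𝔾.r h →
    {x | x ∈ α.D (𝔾.inv h) ∧ α.act h x ∈ α.D (𝔾.inv g)} = α.D (𝔾.inv (𝔾.mul g h))

/-!
Since `β` is a globalization, `E_g = E_{r g}` and each `1'_e` is a finite sum of elements
`β_h(t)` with `r h = e` and `t ∈ D_{d h}`. For such a pair, `a_i = β_h(t x_i)` and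
`b_i = β_h(y_i 1_{d h})` satisfy `∑ a_i β_g(b_i 1'_{g⁻¹}) = δ_{g, r h} β_h(t)`: orthogonality of
the `E_e` kills every `g` that is not a loop at `r h`, and for a loop `g` we have
`β_g β_h = β_h β_k` with `k = h⁻¹ g h`, while `1_{d h} β_k(z) = α_k(z 1_{k⁻¹})`; so the sum is
`β_h(t ∑ x_i α_k(y_i 1_{k⁻¹})) = β_h(t δ_{k ∈ G₀} 1_k)`, and `k ∈ G₀` iff `g ∈ G₀`.
The functions `g ↦ ∑ a_i β_g(b_i 1'_{g⁻¹})` form an additive subgroup of `G → T`, so these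
families add up to Galois coordinates for `T`.
-/

namespace AlgGroupoid

variable {G : Type u} (𝔾 : AlgGroupoid G)

theorem isId_d (g : G) : 𝔾.isId (𝔾.d g) := 𝔾.d_d g

theorem isId_r (g : G) : 𝔾.isId (𝔾.r g) := 𝔾.d_r g

theorem r_eq_self_of_isId {e : G} (he : 𝔾.isId e) : 𝔾.r e = e := by
  conv_lhs => rw [← he]
  rw [𝔾.r_d, he]

def conj (h g : G) : G := 𝔾.mul (𝔾.mul (𝔾.inv h) g) h

variable {𝔾} {g h : G}

theorem d_inv_mul_of_loop (hd : 𝔾.d g = 𝔾.r h) (hr : 𝔾.r g = 𝔾.r h) :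
    𝔾.d (𝔾.mul (𝔾.inv h) g) = 𝔾.r h := by
  rw [𝔾.d_mul _ _ (by rw [𝔾.d_inv, hr]), hd]

theorem r_conj (hd : 𝔾.d g = 𝔾.r h) (hr : 𝔾.r g = 𝔾.r h) : 𝔾.r (𝔾.conj h g) = 𝔾.d h := by
  rw [conj, 𝔾.r_mul' _ _ (d_inv_mul_of_loop hd hr), 𝔾.r_mul' _ _ (by rw [𝔾.d_inv, hr]),
    𝔾.r_inv]

theorem d_conj (hd : 𝔾.d g = 𝔾.r h) (hr : 𝔾.r g = 𝔾.r h) : 𝔾.d (𝔾.conj h g) = 𝔾.d h :=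
  𝔾.d_mul _ _ (d_inv_mul_of_loop hd hr)

theorem mul_conj (hd : 𝔾.d g = 𝔾.r h) (hr : 𝔾.r g = 𝔾.r h) :
    𝔾.mul h (𝔾.conj h g) = 𝔾.mul g h := by
  have hinv : 𝔾.d (𝔾.inv h) = 𝔾.r g := by rw [𝔾.d_inv, hr]
  rw [conj, ← 𝔾.mul_assoc' _ _ _ (by rw [𝔾.r_mul' _ _ hinv, 𝔾.r_inv])
      (d_inv_mul_of_loop hd hr),
    ← 𝔾.mul_assoc' _ _ _ (𝔾.r_inv h).symm hinv, 𝔾.mul_inv, ← hr, 𝔾.r_mul]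

theorem isId_conj_iff (hd : 𝔾.d g = 𝔾.r h) (hr : 𝔾.r g = 𝔾.r h) :
    𝔾.isId (𝔾.conj h g) ↔ 𝔾.isId g := by
  constructor
  · intro hk
    have hgh : 𝔾.mul g h = h := by
      rw [← mul_conj hd hr, ← hk, d_conj hd hr, 𝔾.mul_d]
    have hg : g = 𝔾.r h := by
      rw [← 𝔾.mul_d g, hd, ← 𝔾.mul_inv h, ← 𝔾.mul_assoc' _ _ _ hd (𝔾.r_inv h).symm, hgh]
    exact hg ▸ 𝔾.isId_r h
  · intro hg
    have hg' : g = 𝔾.r h := hg.symm.trans hd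
    rw [conj, hg', ← 𝔾.d_inv, 𝔾.mul_d, 𝔾.inv_mul]
    exact 𝔾.isId_d h

end AlgGroupoid

theorem IsIdealIn.sum_mem {T : Type u} [NonUnitalRing T] {D E : Set T} (hD : IsIdealIn D E)
    {ι : Type*} (s : Finset ι) {f : ι → T} (hf : ∀ i ∈ s, f i ∈ D) : ∑ i ∈ s, f i ∈ D := by
  classical
  induction s using Finset.induction_on with
  | empty => simpa using hD.zero_mem
  | insert a s ha ih =>
    rw [Finset.sum_insert ha]
    exact hD.add_mem (hf a (s.mem_insert_self a)) (ih fun i hi => hf i (s.mem_insert_of_mem hi))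

theorem IsIdentityElem.unique {T : Type u} [NonUnitalRing T] {u v : T} {D : Set T}
    (hu : IsIdentityElem u D) (hv : IsIdentityElem v D) : u = v :=
  ((hv.2 u hu.1).2).symm.trans ((hu.2 v hv.1).1)

namespace PartialGroupoidAction

variable {G : Type u} {𝔾 : AlgGroupoid G} {T : Type u} [NonUnitalRing T] {R : Set T}
  (α : PartialGroupoidAction 𝔾 T R)

theorem D_inv_isIdealIn (g : G) : IsIdealIn (α.D (𝔾.inv g)) (α.D (𝔾.d g)) := by
  simpa only [𝔾.r_inv] using α.ideal (𝔾.inv g)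

theorem D_d_isIdealIn (g : G) : IsIdealIn (α.D (𝔾.d g)) R := by
  simpa only [𝔾.r_d] using α.ideal_r (𝔾.d g)

theorem act_mem {g : G} {x : T} (hx : x ∈ α.D (𝔾.inv g)) : α.act g x ∈ α.D g :=
  (α.bijOn g).mapsTo hx

theorem act_zero (g : G) : α.act g 0 = 0 := by
  have h0 := (α.D_inv_isIdealIn g).zero_mem
  simpa using α.map_add g 0 h0 0 h0

theorem act_sum (g : G) {ι : Type*} (s : Finset ι) {f : ι → T}
    (hf : ∀ i ∈ s, f i ∈ α.D (𝔾.inv g)) : α.act g (∑ i ∈ s, f i) = ∑ i ∈ s, α.act g (f i) := by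
  classical
  induction s using Finset.induction_on with
  | empty => simpa using α.act_zero g
  | insert a s ha ih =>
    have hs : ∀ i ∈ s, f i ∈ α.D (𝔾.inv g) := fun i hi => hf i (s.mem_insert_of_mem hi)
    rw [Finset.sum_insert ha, Finset.sum_insert ha,
      α.map_add g _ (hf a (s.mem_insert_self a)) _ ((α.D_inv_isIdealIn g).sum_mem s hs), ih hs]

theorem isIdentityElem_act {g : G} {u : T} (hu : IsIdentityElem u (α.D (𝔾.inv g))) :
    IsIdentityElem (α.act g u) (α.D g) := by
  refine ⟨α.act_mem hu.1, fun z hz => ?_⟩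
  obtain ⟨w, hw, rfl⟩ := (α.bijOn g).surjOn hz
  rw [← α.map_mul g _ hu.1 _ hw, ← α.map_mul g _ hw _ hu.1, (hu.2 w hw).1, (hu.2 w hw).2]
  exact ⟨rfl, rfl⟩

section RangeDetermined

variable {β : PartialGroupoidAction 𝔾 T R}

theorem D_inv_eq_D_d (hD : ∀ g, β.D g = β.D (𝔾.r g)) (g : G) : β.D (𝔾.inv g) = β.D (𝔾.d g) := by
  rw [hD, 𝔾.r_inv]

theorem act_mem_D_r (hD : ∀ g, β.D g = β.D (𝔾.r g)) {g : G} {x : T} (hx : x ∈ β.D (𝔾.d g)) :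
    β.act g x ∈ β.D (𝔾.r g) := by
  rw [← hD]
  exact β.act_mem (by rwa [D_inv_eq_D_d hD])

theorem act_act_eq_act_act_conj (hD : ∀ g, β.D g = β.D (𝔾.r g)) {g h : G}
    (hd : 𝔾.d g = 𝔾.r h) (hr : 𝔾.r g = 𝔾.r h) {x : T} (hx : x ∈ β.D (𝔾.d h)) :
    β.act g (β.act h x) = β.act h (β.act (𝔾.conj h g) x) := by
  have hdk := AlgGroupoid.d_conj hd hr
  have hrk := AlgGroupoid.r_conj hd hr
  rw [β.comp_cond g h hd _ (by rwa [D_inv_eq_D_d hD])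
      (by rw [D_inv_eq_D_d hD, hd]; exact act_mem_D_r hD hx),
    β.comp_cond h _ hrk.symm _ (by rwa [D_inv_eq_D_d hD, hdk])
      (by rw [D_inv_eq_D_d hD, ← hrk]; exact act_mem_D_r hD (hdk ▸ hx)),
    AlgGroupoid.mul_conj hd hr]

end RangeDetermined

def galoisSums (β : PartialGroupoidAction 𝔾 T R) (oneE : G → T) : AddSubgroup (G → T) where
  carrier := {F | ∃ (k : ℕ) (a b : Fin k → T),
    ∀ g, ∑ i, a i * β.act g (b i * oneE (𝔾.inv g)) = F g}
  zero_mem' := ⟨0, Fin.elim0, Fin.elim0, fun g => by simp⟩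
  add_mem' := by
    rintro F F' ⟨k, a, b, hF⟩ ⟨k', a', b', hF'⟩
    exact ⟨k + k', Fin.append a a', Fin.append b b', fun g => by
      simp [Fin.sum_univ_add, hF, hF']⟩
  neg_mem' := by
    rintro F ⟨k, a, b, hF⟩
    exact ⟨k, -a, b, fun g => by simp [hF]⟩

end PartialGroupoidAction

section Globalization

open PartialGroupoidAction

variable {G : Type u} {𝔾 : AlgGroupoid G} {T : Type u} [NonUnitalRing T] {R R' : Set T}
  {α : PartialGroupoidAction 𝔾 T R} {β : PartialGroupoidAction 𝔾 T R'} {oneD : G → T}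
  {m : ℕ} {x y : Fin m → T}

theorem oneD_r_mul_act_eq (hβD : ∀ g, β.D g = β.D (𝔾.r g))
    (hDE : ∀ e, 𝔾.isId e → IsIdealIn (α.D e) (β.D e))
    (hcompatD : ∀ g, α.D g = α.D (𝔾.r g) ∩ (β.act g '' α.D (𝔾.d g)))
    (hcompatAct : ∀ g, ∀ a ∈ α.D (𝔾.inv g), β.act g a = α.act g a)
    (honeD : ∀ g, IsIdentityElem (oneD g) (α.D g)) (k : G) {z : T} (hz : z ∈ α.D (𝔾.d k)) :
    oneD (𝔾.r k) * β.act k z = α.act k (z * oneD (𝔾.inv k)) := by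
  have hDEd := hDE _ (𝔾.isId_d k)
  have hDEr := hDE _ (𝔾.isId_r k)
  have hαinv := α.D_inv_isIdealIn k
  have hβz : z ∈ β.D (𝔾.inv k) := by rw [D_inv_eq_D_d hβD]; exact hDEd.subset hz
  have hβone : oneD (𝔾.inv k) ∈ β.D (𝔾.inv k) := by
    rw [D_inv_eq_D_d hβD]; exact hDEd.subset (hαinv.subset (honeD _).1)
  obtain ⟨u, hu, hu_eq⟩ := (β.bijOn k).surjOn
    (show oneD (𝔾.r k) ∈ β.D k by rw [hβD]; exact hDEr.subset (honeD _).1)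
  -- `1_{r k} β_k(z) = β_k(u z)` with `β_k(u) = 1_{r k}`, so it lies in `D_{r k} ∩ β_k(D_{d k})`.
  have hmem : oneD (𝔾.r k) * β.act k z ∈ α.D k := by
    rw [hcompatD k]
    refine ⟨hDEr.mul_mem_right (honeD _).1 (act_mem_D_r hβD (hDEd.subset hz)), u * z,
      hDEd.mul_mem_left (by rwa [← D_inv_eq_D_d hβD]) hz, ?_⟩
    rw [β.map_mul k _ hu _ hβz, hu_eq]
  have hunit : β.act k (oneD (𝔾.inv k)) = oneD k := by
    rw [hcompatAct k _ (honeD _).1]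
    exact (α.isIdentityElem_act (honeD _)).unique (honeD k)
  have hzk : z * oneD (𝔾.inv k) ∈ α.D (𝔾.inv k) := hαinv.mul_mem_left hz (honeD _).1
  calc oneD (𝔾.r k) * β.act k z = oneD (𝔾.r k) * β.act k z * oneD k :=
        ((honeD k).2 _ hmem).2.symm
    _ = oneD (𝔾.r k) * α.act k (z * oneD (𝔾.inv k)) := by
        rw [← hunit, mul_assoc, ← β.map_mul k _ hβz _ hβone, hcompatAct k _ hzk]
    _ = α.act k (z * oneD (𝔾.inv k)) :=
        ((honeD _).2 _ ((α.ideal k).subset (α.act_mem hzk))).1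

theorem act_mul_act_act_of_loop (hβD : ∀ g, β.D g = β.D (𝔾.r g))
    (hDE : ∀ e, 𝔾.isId e → IsIdealIn (α.D e) (β.D e))
    (hcompatD : ∀ g, α.D g = α.D (𝔾.r g) ∩ (β.act g '' α.D (𝔾.d g)))
    (hcompatAct : ∀ g, ∀ a ∈ α.D (𝔾.inv g), β.act g a = α.act g a)
    (honeD : ∀ g, IsIdentityElem (oneD g) (α.D g))
    {g h : G} (hd : 𝔾.d g = 𝔾.r h) (hr : 𝔾.r g = 𝔾.r h) {a b : T}
    (ha : a ∈ α.D (𝔾.d h)) (hb : b ∈ α.D (𝔾.d h)) :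
    β.act h a * β.act g (β.act h b)
      = β.act h (a * α.act (𝔾.conj h g) (b * oneD (𝔾.inv (𝔾.conj h g)))) := by
  set k := 𝔾.conj h g
  have hdk : 𝔾.d k = 𝔾.d h := AlgGroupoid.d_conj hd hr
  have hrk : 𝔾.r k = 𝔾.d h := AlgGroupoid.r_conj hd hr
  have hαβ := (hDE _ (𝔾.isId_d h)).subset
  have hbk : b ∈ α.D (𝔾.d k) := by rw [hdk]; exact hb
  have hcut := oneD_r_mul_act_eq hβD hDE hcompatD hcompatAct honeD k hbk
  rw [hrk] at hcut
  have hβk := act_mem_D_r hβD ((hDE _ (𝔾.isId_d k)).subset hbk)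
  rw [hrk, ← D_inv_eq_D_d hβD] at hβk
  rw [act_act_eq_act_act_conj hβD hd hr (hαβ hb),
    ← β.map_mul h _ (by rw [D_inv_eq_D_d hβD]; exact hαβ ha) _ hβk, ← hcut, ← mul_assoc,
    ((honeD _).2 _ ha).2]

theorem sum_act_mul_act_act_of_loop [DecidableEq G] (hβD : ∀ g, β.D g = β.D (𝔾.r g))
    (hDE : ∀ e, 𝔾.isId e → IsIdealIn (α.D e) (β.D e))
    (hcompatD : ∀ g, α.D g = α.D (𝔾.r g) ∩ (β.act g '' α.D (𝔾.d g)))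
    (hcompatAct : ∀ g, ∀ a ∈ α.D (𝔾.inv g), β.act g a = α.act g a)
    (honeD : ∀ g, IsIdentityElem (oneD g) (α.D g))
    (hxR : ∀ i, x i ∈ R) (hyR : ∀ i, y i ∈ R)
    (hGalR : ∀ g : G,
      ∑ i, x i * α.act g (y i * oneD (𝔾.inv g)) = if 𝔾.isId g then oneD g else 0)
    {g h : G} (hd : 𝔾.d g = 𝔾.r h) (hr : 𝔾.r g = 𝔾.r h) {t : T} (ht : t ∈ α.D (𝔾.d h)) :
    ∑ i, β.act h (t * x i) * β.act g (β.act h (y i * oneD (𝔾.d h)))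
      = if 𝔾.isId g then β.act h t else 0 := by
  set k := 𝔾.conj h g
  have hdk : 𝔾.d k = 𝔾.d h := AlgGroupoid.d_conj hd hr
  have hrk : 𝔾.r k = 𝔾.d h := AlgGroupoid.r_conj hd hr
  have hαR := α.D_d_isIdealIn h
  have hone_inv : oneD (𝔾.inv k) ∈ α.D (𝔾.d h) :=
    hdk ▸ (α.D_inv_isIdealIn k).subset (honeD _).1
  have hy : ∀ i, y i * oneD (𝔾.d h) ∈ α.D (𝔾.d h) := fun i =>
    hαR.mul_mem_left (hyR i) (honeD _).1
  have hmem : ∀ i ∈ Finset.univ,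
      t * x i * α.act k (y i * oneD (𝔾.d h) * oneD (𝔾.inv k)) ∈ β.D (𝔾.inv h) := by
    intro i _
    have hyk : y i * oneD (𝔾.d h) * oneD (𝔾.inv k) ∈ α.D (𝔾.inv k) :=
      (α.D_inv_isIdealIn k).mul_mem_left (by rw [hdk]; exact hy i) (honeD _).1
    have hαk := (α.ideal k).subset (α.act_mem hyk)
    rw [hrk] at hαk
    rw [D_inv_eq_D_d hβD]
    exact (hDE _ (𝔾.isId_d h)).subset
      (hαR.mul_mem_right (hαR.mul_mem_right ht (hxR i)) (hαR.subset hαk))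
  have hsum : ∑ i, t * x i * α.act k (y i * oneD (𝔾.d h) * oneD (𝔾.inv k))
      = t * if 𝔾.isId k then oneD k else 0 := by
    rw [← hGalR k, Finset.mul_sum]
    refine Finset.sum_congr rfl fun i _ => ?_
    rw [mul_assoc, mul_assoc (y i), ((honeD _).2 _ hone_inv).1]
  rw [Finset.sum_congr rfl fun i _ => act_mul_act_act_of_loop hβD hDE hcompatD hcompatAct honeD
      hd hr (hαR.mul_mem_right ht (hxR i)) (hy i), ← β.act_sum h _ hmem, hsum]
  by_cases hg : 𝔾.isId g
  · have hk : k = 𝔾.d h := ((AlgGroupoid.isId_conj_iff hd hr).2 hg).symm.trans hdk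
    rw [if_pos ((AlgGroupoid.isId_conj_iff hd hr).2 hg), if_pos hg, hk, ((honeD _).2 _ ht).2]
  · rw [if_neg (mt (AlgGroupoid.isId_conj_iff hd hr).1 hg), if_neg hg, mul_zero, β.act_zero]

theorem sum_act_mul_act_act_eq_single [DecidableEq G] (hβD : ∀ g, β.D g = β.D (𝔾.r g))
    (hDE : ∀ e, 𝔾.isId e → IsIdealIn (α.D e) (β.D e))
    (hcompatD : ∀ g, α.D g = α.D (𝔾.r g) ∩ (β.act g '' α.D (𝔾.d g)))
    (hcompatAct : ∀ g, ∀ a ∈ α.D (𝔾.inv g), β.act g a = α.act g a)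
    (honeD : ∀ g, IsIdentityElem (oneD g) (α.D g)) {oneE : G → T}
    (honeE : ∀ g, IsIdentityElem (oneE g) (β.D g))
    (horthE : ∀ e f, 𝔾.isId e → 𝔾.isId f → e ≠ f → ∀ x ∈ β.D e, ∀ y ∈ β.D f, x * y = 0)
    (hxR : ∀ i, x i ∈ R) (hyR : ∀ i, y i ∈ R)
    (hGalR : ∀ g : G,
      ∑ i, x i * α.act g (y i * oneD (𝔾.inv g)) = if 𝔾.isId g then oneD g else 0)
    (g h : G) {t : T} (ht : t ∈ α.D (𝔾.d h)) :
    ∑ i, β.act h (t * x i) * β.act g (β.act h (y i * oneD (𝔾.d h)) * oneE (𝔾.inv g))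
      = (Pi.single (𝔾.r h) (β.act h t) : G → T) g := by
  have hαR := α.D_d_isIdealIn h
  have hαβ := (hDE _ (𝔾.isId_d h)).subset
  have hβt : ∀ {z}, z ∈ α.D (𝔾.d h) → β.act h z ∈ β.D (𝔾.r h) := fun hz =>
    act_mem_D_r hβD (hαβ hz)
  have hY : ∀ i, β.act h (y i * oneD (𝔾.d h)) ∈ β.D (𝔾.r h) := fun i =>
    hβt (hαR.mul_mem_left (hyR i) (honeD _).1)
  rw [Pi.single_apply]
  by_cases hd : 𝔾.d g = 𝔾.r h
  · have hYg : ∀ i, β.act h (y i * oneD (𝔾.d h)) ∈ β.D (𝔾.inv g) := fun i => by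
      rw [D_inv_eq_D_d hβD, hd]; exact hY i
    simp only [fun i => ((honeE _).2 _ (hYg i)).2]
    by_cases hr : 𝔾.r g = 𝔾.r h
    · rw [sum_act_mul_act_act_of_loop hβD hDE hcompatD hcompatAct honeD hxR hyR hGalR hd hr ht]
      exact if_congr ⟨fun hg => hg.symm.trans hd, fun hg => hg ▸ 𝔾.isId_r h⟩ rfl rfl
    · rw [if_neg (fun hg => hr (by rw [hg, 𝔾.r_r]))]
      refine Finset.sum_eq_zero fun i _ => horthE _ _ (𝔾.isId_r h) (𝔾.isId_r g) (Ne.symm hr) _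
        (hβt (hαR.mul_mem_right ht (hxR i))) _ (act_mem_D_r hβD ?_)
      rw [hd]; exact hY i
  · rw [if_neg (fun hg => hd (by rw [hg, 𝔾.d_r]))]
    refine Finset.sum_eq_zero fun i _ => ?_
    have hβone : oneE (𝔾.inv g) ∈ β.D (𝔾.d g) := D_inv_eq_D_d hβD g ▸ (honeE _).1
    rw [horthE _ _ (𝔾.isId_r h) (𝔾.isId_d g) (Ne.symm hd) _ (hY i) _ hβone, β.act_zero,
      mul_zero]

end Globalization

open PartialGroupoidAction in
theorem partial_galois_to_global_galois_general {G : Type u} [Fintype G]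
    [DecidableEq G] (𝔾 : AlgGroupoid G)
    {T : Type u} [Ring T] {Rset : Set T}
    (α : PartialGroupoidAction 𝔾 T Rset)
    (β : PartialGroupoidAction 𝔾 T (Set.univ : Set T))
    (hDE : ∀ e, 𝔾.isId e → IsIdealIn (α.D e) (β.D e))
    (hcompatD : ∀ g, α.D g = α.D (𝔾.r g) ∩ (β.act g '' α.D (𝔾.d g)))
    (hcompatAct : ∀ g, ∀ a ∈ α.D (𝔾.inv g), β.act g a = α.act g a)
    (hspans : ∀ g, β.D g
      = ↑(AddSubgroup.closure (⋃ h ∈ {h : G | 𝔾.r h = 𝔾.r g}, β.act h '' α.D (𝔾.d h))))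
    (oneD oneE : G → T)
    (honeD : ∀ g, IsIdentityElem (oneD g) (α.D g))
    (honeE : ∀ g, IsIdentityElem (oneE g) (β.D g))
    (horthE : ∀ e f, 𝔾.isId e → 𝔾.isId f → e ≠ f → ∀ x ∈ β.D e, ∀ y ∈ β.D f, x * y = 0)
    (m : ℕ) (x y : Fin m → T) (hxR : ∀ i, x i ∈ Rset) (hyR : ∀ i, y i ∈ Rset)
    (hGalR : ∀ g : G,
      ∑ i, x i * α.act g (y i * oneD (𝔾.inv g)) = if 𝔾.isId g then oneD g else 0) :
    ∃ (k : ℕ) (as bs : Fin k → T), ∀ g : G,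
      ∑ i, as i * β.act g (bs i * oneE (𝔾.inv g)) = if 𝔾.isId g then oneE g else 0 := by
  have hβD : ∀ g, β.D g = β.D (𝔾.r g) := fun g => by rw [hspans g, hspans (𝔾.r g), 𝔾.r_r]
  have hsingle : ∀ h, ∀ t ∈ α.D (𝔾.d h), Pi.single (𝔾.r h) (β.act h t) ∈ β.galoisSums oneE :=
    fun h t ht => ⟨m, fun i => β.act h (t * x i), fun i => β.act h (y i * oneD (𝔾.d h)),
      fun g => sum_act_mul_act_act_eq_single hβD hDE hcompatD hcompatAct honeD honeE horthE
        hxR hyR hGalR g h ht⟩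
  have hunit : ∀ e, 𝔾.isId e → Pi.single e (oneE e) ∈ β.galoisSums oneE := by
    intro e he
    have hmem : oneE e ∈ β.D e := (honeE e).1
    rw [hspans, SetLike.mem_coe] at hmem
    refine (AddSubgroup.closure_le
      (K := (β.galoisSums oneE).comap (AddMonoidHom.single (fun _ : G => T) e))).2 ?_ hmem
    simp only [Set.iUnion_subset_iff, Set.image_subset_iff]
    intro h hh t ht
    have hre : 𝔾.r h = e := (show 𝔾.r h = 𝔾.r e from hh).trans (𝔾.r_eq_self_of_isId he)
    simpa [hre] using hsingle h t ht
  have hdelta : (fun g => if 𝔾.isId g then oneE g else 0)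
      = ∑ e ∈ Finset.univ.filter 𝔾.isId, Pi.single e (oneE e) := by
    ext g
    simp [Finset.sum_apply, Pi.single_apply]
  suffices (fun g => if 𝔾.isId g then oneE g else 0) ∈ β.galoisSums oneE from this
  rw [hdelta]
  exact AddSubgroup.sum_mem _ fun e he => hunit e (Finset.mem_filter.1 he).2

/-- **Theorem 5.1(ii)**: under the standing hypotheses, fix for each identity
`e ∈ G₀` an enumeration `g_{1,e} = e, g_{2,e}, …, g_{n_e,e}` of
`X_e = {h ∈ G : r(h) = e}` (here `en e j`, `j < n e`), and suppose that for
every `l ∈ G` and every valid index `j`, `g_{j,r(l)}⁻¹ · l · g_{j,d(l)} ∈ G₀`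
implies `l ∈ G₀`.  If `R` is an `α`-partial Galois extension of `R^α`, then
`T` is a `β`-Galois extension of `T^β`. -/
theorem partial_galois_to_global_galois {G : Type u} [Nonempty G] [Fintype G]
    [DecidableEq G] (𝔾 : AlgGroupoid G)
    {T : Type u} [Ring T] {Rset : Set T}
    (α : PartialGroupoidAction 𝔾 T Rset)
    (β : PartialGroupoidAction 𝔾 T (Set.univ : Set T)) (hglobal : β.IsGlobal)
    (hDE : ∀ e, 𝔾.isId e → IsIdealIn (α.D e) (β.D e))
    (hcompatD : ∀ g, α.D g = α.D (𝔾.r g) ∩ (β.act g '' α.D (𝔾.d g)))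
    (hcompatAct : ∀ g, ∀ a ∈ α.D (𝔾.inv g), β.act g a = α.act g a)
    (hspans : ∀ g, β.D g
      = ↑(AddSubgroup.closure (⋃ h ∈ {h : G | 𝔾.r h = 𝔾.r g}, β.act h '' α.D (𝔾.d h))))
    (oneD oneE : G → T)
    (honeD : ∀ g, IsIdentityElem (oneD g) (α.D g))
    (honeE : ∀ g, IsIdentityElem (oneE g) (β.D g))
    (hcentD : ∀ g (t : T), oneD g * t = t * oneD g)
    (hcentE : ∀ g (t : T), oneE g * t = t * oneE g)
    (horthE : ∀ e f, 𝔾.isId e → 𝔾.isId f → e ≠ f → ∀ x ∈ β.D e, ∀ y ∈ β.D f, x * y = 0)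
    (h1T : (1 : T) = ∑ e ∈ Finset.univ.filter (fun e => 𝔾.isId e), oneE e)
    (hRset : Rset
      = {x : T | ∃ t : T, x = t * ∑ e ∈ Finset.univ.filter (fun e => 𝔾.isId e), oneD e})
    (n : G → ℕ) (en : G → ℕ → G)
    (hen_r : ∀ e, 𝔾.isId e → ∀ j < n e, 𝔾.r (en e j) = e)
    (hen_inj : ∀ e, 𝔾.isId e → Set.InjOn (en e) (Set.Iio (n e)))
    (hen_surj : ∀ e, 𝔾.isId e → ∀ h : G, 𝔾.r h = e → ∃ j < n e, en e j = h)
    (hen_zero : ∀ e, 𝔾.isId e → en e 0 = e)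
    (hcond : ∀ l : G, ∀ j : ℕ, j < n (𝔾.r l) → j < n (𝔾.d l) →
      𝔾.isId (𝔾.mul (𝔾.mul (𝔾.inv (en (𝔾.r l) j)) l) (en (𝔾.d l) j)) → 𝔾.isId l)
    (m : ℕ) (x y : Fin m → T) (hxR : ∀ i, x i ∈ Rset) (hyR : ∀ i, y i ∈ Rset)
    (hGalR : ∀ g : G,
      ∑ i, x i * α.act g (y i * oneD (𝔾.inv g)) = if 𝔾.isId g then oneD g else 0) :
    ∃ (k : ℕ) (as bs : Fin k → T), ∀ g : G,
      ∑ i, as i * β.act g (bs i * oneE (𝔾.inv g)) = if 𝔾.isId g then oneE g else 0 :=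
  partial_galois_to_global_galois_general 𝔾 α β hDE hcompatD hcompatAct hspans oneD oneE honeD honeE
    horthE m x y hxR hyR hGalR
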